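/- arXiv:1804.06739 — 3 statements merged into one kernel-verified Lean document; each statement's English description precedes it below -/
import Mathlib

section
/- Let F(w,V) = (1/n)·Σ_{i=1}^n ℓ(wᵀ(x_i + V f(x_i)); y_i) and F_lin(u) = (1/n)·Σ_{i=1}^n ℓ(uᵀx_i; y_i). Then for any w ∈ ℝ^d with w ≠ 0, any V ∈ ℝ^{d×k}, and any u ∈ ℝ^d, it holds that ‖∇F(w,V)‖ ≥ (F(w,V) − F_lin(u)) / √(2‖w‖² + ‖u‖²·(2 + ‖V‖²/‖w‖²)), where ∇F(w,V) denotes the gradient of F with respect to the concatenated vector (w, vec(V)), ‖·‖ on vectors is the Euclidean norm and ‖V‖ is the spectral norm of V. -/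
/-!
Move in parameter space along `z = (w - u, ‖w‖⁻² · w (uᵀV))`. The output `wᵀ(x + V c)` is
bilinear in `(w, V)`, and the `V`-component of `z` contributes exactly `uᵀV c`, so the derivative
of every output along `z` is its gap `wᵀ(x + V c) - uᵀx` to the linear prediction. The tangent
inequality of the convex loss then gives `F(w, V) - F_lin(u) ≤ ⟪∇F, z⟫ ≤ ‖∇F‖ ‖z‖`, and
`‖z‖² = ‖w - u‖² + ‖Vᵀu‖² / ‖w‖²` is bounded by the radicand.
-/

open scoped RealInnerProductSpace
open Finset

noncomputable section

/-- Euclidean column vectors in `ℝ^d`. -/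
abbrev Vec (d : ℕ) : Type := EuclideanSpace ℝ (Fin d)

/-- The concatenated parameter vector `(w, vec(V))`. -/
abbrev Param (d k : ℕ) : Type := EuclideanSpace ℝ (Fin d ⊕ Fin d × Fin k)

/-- Pack `(w, V)` into a single Euclidean vector. -/
def pairWV {d k : ℕ} (w : Vec d) (V : Matrix (Fin d) (Fin k) ℝ) : Param d k :=
  (EuclideanSpace.equiv (Fin d ⊕ Fin d × Fin k) ℝ).symm
    (Sum.elim (fun i => w i) (fun p => V p.1 p.2))

/-- The residual-network objective `F(w,V) = (1/n)·Σᵢ ℓ(wᵀ(xᵢ + V f(xᵢ)); yᵢ)`,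
as a function of the concatenated vector `(w, vec(V))`. -/
def netObj {d k n : ℕ} (ℓ : ℝ → ℝ → ℝ) (f : Vec d → Vec k)
    (x : Fin n → Vec d) (y : Fin n → ℝ) (z : Param d k) : ℝ :=
  (1 / (n : ℝ)) *
    ∑ i, ℓ (∑ j, z (Sum.inl j) * ((x i) j + ∑ l, z (Sum.inr (j, l)) * (f (x i)) l)) (y i)

/-- The linear-predictor objective `F_lin(u) = (1/n)·Σᵢ ℓ(uᵀxᵢ; yᵢ)`. -/
def linObj {d n : ℕ} (ℓ : ℝ → ℝ → ℝ) (x : Fin n → Vec d) (y : Fin n → ℝ) (u : Vec d) : ℝ :=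
  (1 / (n : ℝ)) * ∑ i, ℓ (∑ j, u j * (x i) j) (y i)

/-- Spectral norm of a matrix: the operator norm of the induced map between
Euclidean spaces. -/
def matSpectralNorm {a c : ℕ} (V : Matrix (Fin a) (Fin c) ℝ) : ℝ :=
  ‖LinearMap.toContinuousLinearMap (Matrix.toEuclideanLin V)‖


open Matrix

theorem ConvexOn.sub_le_deriv_mul_sub {S : Set ℝ} {g : ℝ → ℝ} (hg : ConvexOn ℝ S g) {p q : ℝ}
    (hp : p ∈ S) (hq : q ∈ S) (hgp : DifferentiableAt ℝ g p) :
    g p - g q ≤ deriv g p * (p - q) := by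
  rcases lt_trichotomy p q with hpq | rfl | hqp
  · have h := hg.deriv_le_slope hp hq hpq hgp
    rw [slope_def_field, le_div_iff₀ (sub_pos.2 hpq)] at h
    linarith
  · simp
  · have h := hg.slope_le_deriv hq hp hqp hgp
    rwa [slope_def_field, div_le_iff₀ (sub_pos.2 hqp)] at h

theorem ConvexOn.sub_le_fderiv_comp {E : Type*} [NormedAddCommGroup E] [NormedSpace ℝ E]
    {g : ℝ → ℝ} {G : E → ℝ} {θ z : E} {t : ℝ} (hg : ConvexOn ℝ Set.univ g)
    (hgd : DifferentiableAt ℝ g (G θ)) (hG : DifferentiableAt ℝ G θ)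
    (hdir : fderiv ℝ G θ z = G θ - t) :
    g (G θ) - g t ≤ fderiv ℝ (fun z => g (G z)) θ z := by
  change _ ≤ fderiv ℝ (g ∘ G) θ z
  rw [(hgd.hasDerivAt.comp_hasFDerivAt θ hG.hasFDerivAt).fderiv, _root_.smul_apply, hdir,
    smul_eq_mul]
  exact hg.sub_le_deriv_mul_sub (Set.mem_univ _) (Set.mem_univ _) hgd

theorem mul_sum_comp_sub_le_fderiv {ι E : Type*} [Fintype ι] [NormedAddCommGroup E]
    [NormedSpace ℝ E] {ℓ : ι → ℝ → ℝ} {G : ι → E → ℝ} {θ z : E} {t : ι → ℝ} {c : ℝ} (hc : 0 ≤ c)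
    (hℓ : ∀ i, ConvexOn ℝ Set.univ (ℓ i)) (hℓd : ∀ i, DifferentiableAt ℝ (ℓ i) (G i θ))
    (hG : ∀ i, DifferentiableAt ℝ (G i) θ) (hdir : ∀ i, fderiv ℝ (G i) θ z = G i θ - t i) :
    c * ∑ i, ℓ i (G i θ) - c * ∑ i, ℓ i (t i) ≤ fderiv ℝ (fun z => c * ∑ i, ℓ i (G i z)) θ z := by
  have hcomp : ∀ i, DifferentiableAt ℝ (fun z => ℓ i (G i z)) θ := fun i =>
    (hℓd i).comp θ (hG i)
  rw [fderiv_const_mul (DifferentiableAt.fun_sum fun i _ => hcomp i),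
    fderiv_fun_sum fun i _ => hcomp i, _root_.smul_apply, smul_eq_mul,
    _root_.sum_apply, ← mul_sub, ← Finset.sum_sub_distrib]
  gcongr with i
  exact (hℓ i).sub_le_fderiv_comp (hℓd i) (hG i) (hdir i)

theorem norm_vecMul_le_matSpectralNorm_mul {a c : ℕ} (V : Matrix (Fin a) (Fin c) ℝ) (u : Vec a) :
    ‖(EuclideanSpace.equiv (Fin c) ℝ).symm (⇑u ᵥ* V)‖ ≤ matSpectralNorm V * ‖u‖ := by
  open scoped Matrix.Norms.L2Operator in
  have h := l2_opNorm_mulVec Vᵀ u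
  rwa [mulVec_transpose, ← conjTranspose_eq_transpose_of_trivial, l2_opNorm_conjTranspose] at h

section ResNet

variable {d k : ℕ}

@[simp] theorem pairWV_inl (w : Vec d) (V : Matrix (Fin d) (Fin k) ℝ) (j : Fin d) :
    pairWV w V (Sum.inl j) = w j := rfl

@[simp] theorem pairWV_inr (w : Vec d) (V : Matrix (Fin d) (Fin k) ℝ) (p : Fin d × Fin k) :
    pairWV w V (Sum.inr p) = V p.1 p.2 := rfl

theorem norm_pairWV_sq (w : Vec d) (V : Matrix (Fin d) (Fin k) ℝ) :
    ‖pairWV w V‖ ^ 2 = ‖w‖ ^ 2 + ∑ j, ∑ l, V j l ^ 2 := by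
  rw [EuclideanSpace.real_norm_sq_eq, EuclideanSpace.real_norm_sq_eq, Fintype.sum_sum_type,
    Fintype.sum_prod_type]
  simp

def resNetOutput (xi : Vec d) (ci : Vec k) (z : Param d k) : ℝ :=
  ∑ j, z (Sum.inl j) * (xi j + ∑ l, z (Sum.inr (j, l)) * ci l)

theorem resNetOutput_pairWV (xi : Vec d) (ci : Vec k) (w : Vec d)
    (V : Matrix (Fin d) (Fin k) ℝ) :
    resNetOutput xi ci (pairWV w V) = ⇑w ⬝ᵥ (⇑xi + V *ᵥ ⇑ci) := by
  simp [resNetOutput, dotProduct, mulVec]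

theorem differentiable_resNetOutput (xi : Vec d) (ci : Vec k) :
    Differentiable ℝ (resNetOutput xi ci) := by
  unfold resNetOutput
  fun_prop

theorem fderiv_resNetOutput_pairWV (xi : Vec d) (ci : Vec k) (w a : Vec d)
    (V B : Matrix (Fin d) (Fin k) ℝ) :
    fderiv ℝ (resNetOutput xi ci) (pairWV w V) (pairWV a B) =
      ⇑a ⬝ᵥ (⇑xi + V *ᵥ ⇑ci) + ⇑w ⬝ᵥ (B *ᵥ ⇑ci) := by
  let π : Fin d ⊕ Fin d × Fin k → Param d k →L[ℝ] ℝ := fun p => EuclideanSpace.proj p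
  have h : HasFDerivAt (resNetOutput xi ci) _ (pairWV w V) :=
    HasFDerivAt.fun_sum fun j _ => (π (Sum.inl j)).hasFDerivAt.mul <|
      (hasFDerivAt_const _ _).add <| HasFDerivAt.fun_sum fun l _ =>
        (π (Sum.inr (j, l))).hasFDerivAt.mul_const (ci l)
  rw [h.fderiv]
  simp only [PiLp.proj_apply, pairWV_inl, zero_add, pairWV_inr, sum_add_distrib, _root_.add_apply,
    _root_.sum_apply, _root_.smul_apply, smul_eq_mul, mul_comm, mul_sum, mul_add, dotProduct,
    Pi.add_apply, mulVec, π]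
  ring

def descentDir (w u : Vec d) (V : Matrix (Fin d) (Fin k) ℝ) : Param d k :=
  pairWV (w - u) ((‖w‖ ^ 2)⁻¹ • vecMulVec ⇑w (⇑u ᵥ* V))

theorem fderiv_resNetOutput_descentDir (xi : Vec d) (ci : Vec k) {w : Vec d} (hw : w ≠ 0)
    (u : Vec d) (V : Matrix (Fin d) (Fin k) ℝ) :
    fderiv ℝ (resNetOutput xi ci) (pairWV w V) (descentDir w u V) =
      resNetOutput xi ci (pairWV w V) - ⇑u ⬝ᵥ ⇑xi := by
  have hww : ⇑w ⬝ᵥ ⇑w = ‖w‖ ^ 2 := by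
    rw [EuclideanSpace.real_norm_sq_eq]
    simp [dotProduct, sq]
  have hw2 : ‖w‖ ^ 2 ≠ 0 := by positivity
  have hcorr : ⇑w ⬝ᵥ (((‖w‖ ^ 2)⁻¹ • vecMulVec ⇑w (⇑u ᵥ* V)) *ᵥ ⇑ci) = ⇑u ⬝ᵥ (V *ᵥ ⇑ci) := by
    rw [smul_mulVec, vecMulVec_mulVec, op_smul_eq_smul, dotProduct_smul, dotProduct_smul,
      hww, ← dotProduct_mulVec, smul_eq_mul, smul_eq_mul]
    field_simp
  rw [descentDir, fderiv_resNetOutput_pairWV, resNetOutput_pairWV, hcorr, WithLp.ofLp_sub,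
    sub_dotProduct, dotProduct_add, dotProduct_add]
  ring

theorem norm_descentDir_sq (w u : Vec d) (V : Matrix (Fin d) (Fin k) ℝ) :
    ‖descentDir w u V‖ ^ 2 =
      ‖w - u‖ ^ 2 + ‖(EuclideanSpace.equiv (Fin k) ℝ).symm (⇑u ᵥ* V)‖ ^ 2 / ‖w‖ ^ 2 := by
  rw [descentDir, norm_pairWV_sq,
    EuclideanSpace.real_norm_sq_eq ((EuclideanSpace.equiv _ ℝ).symm _)]
  simp only [Matrix.smul_apply, vecMulVec_apply, smul_eq_mul, mul_pow, ← mul_sum, ← sum_mul,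
    PiLp.coe_symm_continuousLinearEquiv, WithLp.ofLp_toLp]
  rw [← EuclideanSpace.real_norm_sq_eq w]
  rcases eq_or_ne ‖w‖ 0 with hw | hw
  · simp [hw]
  · field_simp

theorem norm_descentDir_le (w u : Vec d) (V : Matrix (Fin d) (Fin k) ℝ) :
    ‖descentDir w u V‖ ≤
      √(2 * ‖w‖ ^ 2 + ‖u‖ ^ 2 * (2 + matSpectralNorm V ^ 2 / ‖w‖ ^ 2)) := by
  have hwu : ‖w - u‖ ^ 2 ≤ 2 * ‖w‖ ^ 2 + 2 * ‖u‖ ^ 2 := by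
    nlinarith [norm_sub_le w u, norm_nonneg (w - u), sq_nonneg (‖w‖ - ‖u‖)]
  have hs : ‖(EuclideanSpace.equiv (Fin k) ℝ).symm (⇑u ᵥ* V)‖ ^ 2 / ‖w‖ ^ 2 ≤
      (matSpectralNorm V * ‖u‖) ^ 2 / ‖w‖ ^ 2 := by
    gcongr
    exact norm_vecMul_le_matSpectralNorm_mul V u
  apply Real.le_sqrt_of_sq_le
  rw [norm_descentDir_sq]
  linarith [show (matSpectralNorm V * ‖u‖) ^ 2 / ‖w‖ ^ 2 =
    ‖u‖ ^ 2 * (matSpectralNorm V ^ 2 / ‖w‖ ^ 2) by ring]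

end ResNet

/-- Theorem 1 of the paper. -/
theorem norm_gradient_ge_suboptimality
    {d k n : ℕ} (ℓ : ℝ → ℝ → ℝ) (f : Vec d → Vec k)
    (x : Fin n → Vec d) (y : Fin n → ℝ)
    (hconv : ∀ y₀ : ℝ, ConvexOn ℝ Set.univ fun p => ℓ p y₀)
    (hdiff : ∀ y₀ : ℝ, Differentiable ℝ fun p => ℓ p y₀)
    (w : Vec d) (hw : w ≠ 0) (V : Matrix (Fin d) (Fin k) ℝ) (u : Vec d) :
    ‖gradient (netObj ℓ f x y) (pairWV w V)‖ ≥
      (netObj ℓ f x y (pairWV w V) - linObj ℓ x y u) /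
        Real.sqrt (2 * ‖w‖ ^ 2 + ‖u‖ ^ 2 * (2 + matSpectralNorm V ^ 2 / ‖w‖ ^ 2)) := by
  set θ := pairWV w V
  set z := descentDir w u V
  have hgap : netObj ℓ f x y θ - linObj ℓ x y u ≤ fderiv ℝ (netObj ℓ f x y) θ z :=
    mul_sum_comp_sub_le_fderiv (G := fun i => resNetOutput (x i) (f (x i))) (by positivity)
      (fun i => hconv (y i)) (fun i => hdiff (y i) _)
      (fun i => differentiable_resNetOutput _ _ θ)
      (fun i => fderiv_resNetOutput_descentDir _ _ hw u V)
  refine div_le_of_le_mul₀ (Real.sqrt_nonneg _) (norm_nonneg _) ?_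
  calc netObj ℓ f x y θ - linObj ℓ x y u
      ≤ fderiv ℝ (netObj ℓ f x y) θ z := hgap
    _ = ⟪gradient (netObj ℓ f x y) θ, z⟫ := inner_gradient_left.symm
    _ ≤ ‖gradient (netObj ℓ f x y) θ‖ * ‖z‖ := real_inner_le_norm _ _
    _ ≤ _ := by gcongr; exact norm_descentDir_le w u V

end
end

section
/- Let F(w,V) = (1/n)·Σ_{i=1}^n ℓ(wᵀ(x_i + V f(x_i)); y_i) with ℓ(·;y) twice differentiable, and define r := (1/n)·Σ_{i=1}^n ℓ'(0; y_i)·f(x_i) ∈ ℝ^k. Then for every V ∈ ℝ^{d×k}, at the point w = 0: (i) the block of second partial derivatives of F with respect to the entries of V vanishes, i.e. ∂²F/∂V_{i,j}∂V_{i',j'}(0,V) = 0 for all i,j,i',j'; and (ii) for each coordinate index i of w, the matrix of mixed second partial derivatives satisfies ∂²F/∂w_i∂V(0,V) = e_i rᵀ, where e_i ∈ ℝ^d is the i-th standard basis vector. -/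
/-!
Each summand of `F` is `ℓ(·; yᵢ)` composed with a quadratic predictor `gᵢ z = Lᵢ z + Bᵢ z z`,
where `Lᵢ z = wᵀxᵢ` and `Bᵢ z z' = wᵀ V' f(xᵢ)` only reads the `w`-part of its first argument.
By the chain rule the `(p, q)` Hessian entry of `F` is the average of
`ℓ'(gᵢ z) (Bᵢ p q + Bᵢ q p) + ℓ''(gᵢ z) ∂ₚgᵢ ∂_qgᵢ`. At `w = 0` both `gᵢ` and its derivative in
any `V`-direction vanish, so only `ℓ'(0) (Bᵢ p q + Bᵢ q p)` survives: it is `0` for two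
`V`-directions and `δᵢⱼ ℓ'(0) f(xᵢ)ₗ` for the directions `wᵢ` and `Vⱼₗ`.
-/

open scoped RealInnerProductSpace
open Finset

noncomputable section

/-- The vector `r = (1/n)·Σᵢ ℓ'(0; yᵢ)·f(xᵢ) ∈ ℝ^k`. -/
def rVec {d k n : ℕ} (ℓ : ℝ → ℝ → ℝ) (f : Vec d → Vec k)
    (x : Fin n → Vec d) (y : Fin n → ℝ) : Vec k :=
  (1 / (n : ℝ)) • ∑ i, deriv (fun p => ℓ p (y i)) 0 • f (x i)

/-- The Hessian matrix of second partial derivatives of `F`. -/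
def hessianMatrix {ι : Type} [Fintype ι] [DecidableEq ι] (F : EuclideanSpace ℝ ι → ℝ)
    (z : EuclideanSpace ℝ ι) : Matrix ι ι ℝ :=
  Matrix.of fun p q =>
    fderiv ℝ (fun v => fderiv ℝ F v (EuclideanSpace.single q 1)) z (EuclideanSpace.single p 1)

namespace QuadraticModel

variable {E : Type*} [NormedAddCommGroup E] [NormedSpace ℝ E]

def quadratic (L : E →L[ℝ] ℝ) (B : E →L[ℝ] E →L[ℝ] ℝ) (v : E) : ℝ := L v + B v v

def quadraticDeriv (L : E →L[ℝ] ℝ) (B : E →L[ℝ] E →L[ℝ] ℝ) (v : E) : E →L[ℝ] ℝ :=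
  L + B v + B.flip v

section

variable (L : E →L[ℝ] ℝ) (B : E →L[ℝ] E →L[ℝ] ℝ)

theorem hasFDerivAt_quadratic (z : E) :
    HasFDerivAt (quadratic L B) (quadraticDeriv L B z) z :=
  (L.hasFDerivAt.fun_add (B.hasFDerivAt.clm_apply (hasFDerivAt_id z))).congr_fderiv <| by
    ext u; simp [quadraticDeriv, add_assoc]

theorem hasFDerivAt_quadraticDeriv_apply (u z : E) :
    HasFDerivAt (fun v => quadraticDeriv L B v u) (B.flip u + B u) z :=
  (((B.flip u + B u).hasFDerivAt (x := z)).const_add (L u)).congr_of_eventuallyEq <|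
    .of_forall fun v => by simp [quadraticDeriv]; ring

end

variable {ι : Type*} [Fintype ι]
  (c : ℝ) (φ : ι → ℝ → ℝ) (L : ι → E →L[ℝ] ℝ) (B : ι → E →L[ℝ] E →L[ℝ] ℝ)

def risk (v : E) : ℝ := c * ∑ i, φ i (quadratic (L i) (B i) v)

theorem hasFDerivAt_risk (hφ : ∀ i, Differentiable ℝ (φ i)) (v : E) :
    HasFDerivAt (risk c φ L B)
      (c • ∑ i, deriv (φ i) (quadratic (L i) (B i) v) • quadraticDeriv (L i) (B i) v) v :=
  (HasFDerivAt.fun_sum fun i _ =>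
    (hφ i _).hasDerivAt.comp_hasFDerivAt v (hasFDerivAt_quadratic (L i) (B i) v)).const_mul c

theorem fderiv_fderiv_risk_apply (hφ : ∀ i, Differentiable ℝ (φ i)) {z : E}
    (hφ' : ∀ i, DifferentiableAt ℝ (deriv (φ i)) (quadratic (L i) (B i) z)) (p q : E) :
    fderiv ℝ (fun v => fderiv ℝ (risk c φ L B) v q) z p =
      c * ∑ i, (deriv (φ i) (quadratic (L i) (B i) z) * (B i p q + B i q p) +
        deriv (deriv (φ i)) (quadratic (L i) (B i) z) *
          quadraticDeriv (L i) (B i) z p * quadraticDeriv (L i) (B i) z q) := by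
  have hfderiv : (fun v => fderiv ℝ (risk c φ L B) v q) = fun v =>
      c * ∑ i, deriv (φ i) (quadratic (L i) (B i) v) * quadraticDeriv (L i) (B i) v q := by
    funext v
    simp [(hasFDerivAt_risk c φ L B hφ v).fderiv]
  have hsecond : HasFDerivAt (fun v =>
      c * ∑ i, deriv (φ i) (quadratic (L i) (B i) v) * quadraticDeriv (L i) (B i) v q) _ z :=
    (HasFDerivAt.fun_sum fun i _ =>
      ((hφ' i).hasDerivAt.comp_hasFDerivAt z (hasFDerivAt_quadratic (L i) (B i) z)).fun_mul
        (hasFDerivAt_quadraticDeriv_apply (L i) (B i) q z)).const_mul c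
  rw [hfderiv, hsecond.fderiv]
  simp only [_root_.smul_apply, _root_.sum_apply, _root_.add_apply, ContinuousLinearMap.flip_apply,
    Function.comp_apply, smul_eq_mul]
  exact congrArg (c * ·) (Finset.sum_congr rfl fun i _ => by ring)

end QuadraticModel

namespace ResidualNet

open QuadraticModel

variable {d k n : ℕ}

def inputForm (a : Vec d) : Param d k →L[ℝ] ℝ :=
  ∑ j, a j • EuclideanSpace.proj (Sum.inl j)

def residualForm (b : Vec k) : Param d k →L[ℝ] Param d k →L[ℝ] ℝ :=
  ∑ j, ∑ l, b l •
    (EuclideanSpace.proj (Sum.inl j)).smulRight (EuclideanSpace.proj (Sum.inr (j, l)))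

theorem inputForm_apply (a : Vec d) (u : Param d k) :
    inputForm a u = ∑ j, a j * u (Sum.inl j) := by
  simp [inputForm]

theorem residualForm_apply (b : Vec k) (u v : Param d k) :
    residualForm b u v = ∑ j, u (Sum.inl j) * ∑ l, b l * v (Sum.inr (j, l)) := by
  simp [residualForm, mul_sum, mul_left_comm]

theorem netObj_eq_risk (ℓ : ℝ → ℝ → ℝ) (f : Vec d → Vec k) (x : Fin n → Vec d) (y : Fin n → ℝ) :
    netObj ℓ f x y = risk (1 / (n : ℝ)) (fun i p => ℓ p (y i)) (fun i => inputForm (x i))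
      (fun i => residualForm (f (x i))) := by
  funext z
  simp only [netObj, risk, quadratic, inputForm_apply, residualForm_apply, ← sum_add_distrib]
  congr! 4 with i - j
  simp only [mul_add, mul_comm]

theorem residualForm_eq_zero {u : Param d k} (hu : ∀ j, u (Sum.inl j) = 0) (b : Vec k) :
    residualForm b u = 0 := by
  ext v
  simp [residualForm_apply, hu]

theorem quadratic_eq_zero {z : Param d k} (hz : ∀ j, z (Sum.inl j) = 0) (a : Vec d) (b : Vec k) :
    quadratic (inputForm a) (residualForm b) z = 0 := by
  simp [quadratic, inputForm_apply, residualForm_eq_zero hz, hz]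

theorem quadraticDeriv_apply_eq_zero {u z : Param d k} (hu : ∀ j, u (Sum.inl j) = 0)
    (hz : ∀ j, z (Sum.inl j) = 0) (a : Vec d) (b : Vec k) :
    quadraticDeriv (inputForm a) (residualForm b) z u = 0 := by
  simp [quadraticDeriv, inputForm_apply, residualForm_eq_zero hz, residualForm_eq_zero hu, hu]

theorem residualForm_single_single (b : Vec k) (i j : Fin d) (l : Fin k) :
    residualForm b (EuclideanSpace.single (Sum.inl i) 1)
      (EuclideanSpace.single (Sum.inr (j, l)) 1) = if i = j then b l else 0 := by
  by_cases hij : i = j <;> simp [residualForm_apply, hij]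

theorem rVec_apply (ℓ : ℝ → ℝ → ℝ) (f : Vec d → Vec k) (x : Fin n → Vec d) (y : Fin n → ℝ)
    (l : Fin k) :
    rVec ℓ f x y l = 1 / (n : ℝ) * ∑ i, deriv (fun p => ℓ p (y i)) 0 * f (x i) l := by
  simp [rVec]

end ResidualNet

open QuadraticModel ResidualNet

/-- at `w = 0`, (i) the `V`-by-`V` block of second partial derivatives of `F`
vanishes, and (ii) the mixed second partials satisfy `∂²F/∂wᵢ∂V(0,V) = eᵢ rᵀ`. -/
theorem hessian_blocks_at_zero
    {d k n : ℕ} (ℓ : ℝ → ℝ → ℝ) (f : Vec d → Vec k)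
    (x : Fin n → Vec d) (y : Fin n → ℝ)
    (hdiff : ∀ y₀ : ℝ, Differentiable ℝ fun p => ℓ p y₀)
    (hdiff2 : ∀ y₀ : ℝ, Differentiable ℝ (deriv fun p => ℓ p y₀))
    (V : Matrix (Fin d) (Fin k) ℝ) :
    (∀ (i : Fin d) (j : Fin k) (i' : Fin d) (j' : Fin k),
        hessianMatrix (netObj ℓ f x y) (pairWV 0 V) (Sum.inr (i, j)) (Sum.inr (i', j')) = 0) ∧
      (∀ (i : Fin d) (j : Fin d) (l : Fin k),
        hessianMatrix (netObj ℓ f x y) (pairWV 0 V) (Sum.inl i) (Sum.inr (j, l)) =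
          if i = j then rVec ℓ f x y l else 0) := by
  have hw : ∀ j, pairWV (0 : Vec d) V (Sum.inl j) = 0 := fun _ => rfl
  have hV : ∀ p j, EuclideanSpace.single (Sum.inr p : Fin d ⊕ Fin d × Fin k) (1 : ℝ)
      (Sum.inl j) = 0 := by
    simp
  have hessian_eq (p q) := fderiv_fderiv_risk_apply (1 / (n : ℝ)) (fun i p => ℓ p (y i))
    (fun i => inputForm (x i)) (fun i => residualForm (f (x i))) (fun i => hdiff (y i))
    (fun i => hdiff2 (y i) _) (z := pairWV 0 V) (EuclideanSpace.single p 1)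
    (EuclideanSpace.single q 1)
  simp only [hessianMatrix, Matrix.of_apply, netObj_eq_risk, hessian_eq, quadratic_eq_zero hw,
    quadraticDeriv_apply_eq_zero (hV _) hw, residualForm_eq_zero (hV _)]
  refine ⟨fun i j i' j' => by simp, fun i j l => ?_⟩
  by_cases hij : i = j <;> simp [residualForm_single_single, hij, rVec_apply, mul_sum]

end
end

section
/- Let F(w,V) = (1/n)·Σ_{i=1}^n ℓ(wᵀ(x_i + V f(x_i)); y_i) with ℓ(·;y) differentiable and convex, F_lin(u) = (1/n)·Σ_{i=1}^n ℓ(uᵀx_i; y_i), and r := (1/n)·Σ_{i=1}^n ℓ'(0; y_i)·f(x_i). Then for every V ∈ ℝ^{d×k}: ‖∇F(0,V)‖ + ‖V‖·‖r‖ ≥ ‖∇F_lin(0)‖, where ∇F(0,V) is the gradient of F with respect to (w, vec(V)) at w = 0 (Euclidean norm), ‖V‖ is the spectral norm, and ‖r‖, ‖∇F_lin(0)‖ are Euclidean norms. -/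
open scoped RealInnerProductSpace
open Finset

noncomputable section

/-! Each predictor `wᵀ(xᵢ + V f(xᵢ))` vanishes at `w = 0` together with its `V`-derivative, and
its `w`-derivative there is `xᵢ + V f(xᵢ)`. By the chain rule `∇F(0,V)` has zero `V`-block and
`w`-block `∇F_lin(0) + V r`, so `‖∇F(0,V)‖ = ‖∇F_lin(0) + V r‖`, and the triangle inequality with
`‖V r‖ ≤ ‖V‖ ‖r‖` concludes. -/

section GradientCalculus

variable {E : Type*} [NormedAddCommGroup E] [InnerProductSpace ℝ E] [CompleteSpace E] {z₀ : E}

theorem hasGradientAt_inner_const (a : E) : HasGradientAt (fun z => ⟪a, z⟫) a z₀ := by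
  rw [hasGradientAt_iff_hasFDerivAt]
  exact (innerSL ℝ a).hasFDerivAt

theorem HasGradientAt.const_mul {p : E → ℝ} {a : E} (hp : HasGradientAt p a z₀) (c : ℝ) :
    HasGradientAt (fun z => c * p z) (c • a) z₀ := by
  rw [hasGradientAt_iff_hasFDerivAt, map_smul] at *
  exact hp.const_mul c

theorem HasGradientAt.sum {ι : Type*} {s : Finset ι} {p : ι → E → ℝ} {a : ι → E}
    (hp : ∀ i ∈ s, HasGradientAt (p i) (a i) z₀) :
    HasGradientAt (fun z => ∑ i ∈ s, p i z) (∑ i ∈ s, a i) z₀ := by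
  rw [hasGradientAt_iff_hasFDerivAt, map_sum]
  exact HasFDerivAt.fun_sum fun i hi => (hp i hi).hasFDerivAt

theorem HasGradientAt.mul {p q : E → ℝ} {a b : E} (hp : HasGradientAt p a z₀)
    (hq : HasGradientAt q b z₀) :
    HasGradientAt (fun z => p z * q z) (p z₀ • b + q z₀ • a) z₀ := by
  rw [hasGradientAt_iff_hasFDerivAt, map_add, map_smul, map_smul] at *
  exact hp.mul hq

theorem HasDerivAt.comp_hasGradientAt {g : ℝ → ℝ} {g' : ℝ} {p : E → ℝ} {a : E}
    (hg : HasDerivAt g g' (p z₀)) (hp : HasGradientAt p a z₀) :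
    HasGradientAt (fun z => g (p z)) (g' • a) z₀ := by
  rw [hasGradientAt_iff_hasFDerivAt, map_smul] at *
  exact hg.comp_hasFDerivAt z₀ hp

theorem hasGradientAt_empiricalRisk {ι : Type*} [Fintype ι] (ℓ : ℝ → ℝ → ℝ) (y : ι → ℝ)
    {ψ : ι → E → ℝ} {a : ι → E} (hψ : ∀ i, HasGradientAt (ψ i) (a i) z₀)
    (hψ₀ : ∀ i, ψ i z₀ = 0) (hℓ : ∀ i, DifferentiableAt ℝ (fun p => ℓ p (y i)) 0) (c : ℝ) :
    HasGradientAt (fun z => c * ∑ i, ℓ (ψ i z) (y i))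
      (c • ∑ i, deriv (fun p => ℓ p (y i)) 0 • a i) z₀ := by
  refine (HasGradientAt.sum fun i _ => ?_).const_mul c
  have hℓi : HasDerivAt (fun p => ℓ p (y i)) (deriv (fun p => ℓ p (y i)) 0) (ψ i z₀) := by
    rw [hψ₀ i]
    exact (hℓ i).hasDerivAt
  exact hℓi.comp_hasGradientAt (hψ i)

end GradientCalculus

theorem norm_pairWV_zero_right {d k : ℕ} (w : Vec d) :
    ‖pairWV w (0 : Matrix (Fin d) (Fin k) ℝ)‖ = ‖w‖ := by
  simp [EuclideanSpace.norm_eq, Fintype.sum_sum_type, pairWV]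

theorem hasGradientAt_resPredictor {d k : ℕ} (u : Vec d) (φ : Vec k)
    (V : Matrix (Fin d) (Fin k) ℝ) :
    HasGradientAt
      (fun z : Param d k => ∑ j, z (Sum.inl j) * (u j + ∑ l, z (Sum.inr (j, l)) * φ l))
      (pairWV (u + Matrix.toEuclideanLin V φ) 0) (pairWV 0 V) := by
  classical
  have hw : ∀ j, HasGradientAt (fun z : Param d k => z (Sum.inl j))
      (EuclideanSpace.single (Sum.inl j) 1) (pairWV 0 V) := fun j => by
    simpa [EuclideanSpace.inner_single_left] using hasGradientAt_inner_const (z₀ := pairWV 0 V)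
      (EuclideanSpace.single (Sum.inl j) (1 : ℝ) : Param d k)
  have hq : ∀ j, DifferentiableAt ℝ
      (fun z : Param d k => u j + ∑ l, z (Sum.inr (j, l)) * φ l) (pairWV 0 V) := fun j => by
    fun_prop
  convert HasGradientAt.sum fun j _ => (hw j).mul (hq j).hasGradientAt using 1
  ext (j | p) <;> simp [pairWV, Matrix.toLpLin_apply, Matrix.mulVec, dotProduct, Pi.single_apply]

theorem hasGradientAt_linObj {d n : ℕ} (ℓ : ℝ → ℝ → ℝ) (x : Fin n → Vec d) (y : Fin n → ℝ)
    (hℓ : ∀ i, DifferentiableAt ℝ (fun p => ℓ p (y i)) 0) :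
    HasGradientAt (linObj ℓ x y)
      ((1 / (n : ℝ)) • ∑ i, deriv (fun p => ℓ p (y i)) 0 • x i) 0 := by
  refine hasGradientAt_empiricalRisk ℓ y (fun i => ?_) (fun i => by simp) hℓ _
  simpa [PiLp.inner_apply, mul_comm] using hasGradientAt_inner_const (z₀ := (0 : Vec d)) (x i)

theorem hasGradientAt_netObj {d k n : ℕ} (ℓ : ℝ → ℝ → ℝ) (f : Vec d → Vec k)
    (x : Fin n → Vec d) (y : Fin n → ℝ) (hℓ : ∀ i, DifferentiableAt ℝ (fun p => ℓ p (y i)) 0)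
    (V : Matrix (Fin d) (Fin k) ℝ) :
    HasGradientAt (netObj ℓ f x y)
      (pairWV (gradient (linObj ℓ x y) 0 + Matrix.toEuclideanLin V (rVec ℓ f x y)) 0)
      (pairWV 0 V) := by
  have hgrad : pairWV ((1 / (n : ℝ)) • ∑ i, deriv (fun p => ℓ p (y i)) 0 • x i +
        Matrix.toEuclideanLin V (rVec ℓ f x y)) 0 =
      (1 / (n : ℝ)) • ∑ i, deriv (fun p => ℓ p (y i)) 0 •
        pairWV (x i + Matrix.toEuclideanLin V (f (x i))) (0 : Matrix (Fin d) (Fin k) ℝ) := by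
    refine PiLp.ext ?_
    rintro (j | p) <;> simp [pairWV, rVec, WithLp.ofLp_sum, Matrix.toLpLin_apply, Matrix.mulVec,
      dotProduct, mul_add, sum_add_distrib]
  rw [(hasGradientAt_linObj ℓ x y hℓ).gradient, hgrad]
  exact hasGradientAt_empiricalRisk ℓ y (fun i => hasGradientAt_resPredictor (x i) (f (x i)) V)
    (fun i => by simp [pairWV]) hℓ _

theorem grad_at_zero_triangle_bound_general
    {d k n : ℕ} (ℓ : ℝ → ℝ → ℝ) (f : Vec d → Vec k)
    (x : Fin n → Vec d) (y : Fin n → ℝ)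
    (hdiff : ∀ y₀ : ℝ, Differentiable ℝ fun p => ℓ p y₀)
    (V : Matrix (Fin d) (Fin k) ℝ) :
    ‖gradient (netObj ℓ f x y) (pairWV 0 V)‖ + matSpectralNorm V * ‖rVec ℓ f x y‖ ≥
      ‖gradient (linObj ℓ x y) 0‖ := by
  rw [(hasGradientAt_netObj ℓ f x y (fun i => hdiff (y i) 0) V).gradient,
    norm_pairWV_zero_right]
  have hVr : ‖Matrix.toEuclideanLin V (rVec ℓ f x y)‖ ≤ matSpectralNorm V * ‖rVec ℓ f x y‖ :=
    (LinearMap.toContinuousLinearMap (Matrix.toEuclideanLin V)).le_opNorm _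
  linarith [norm_le_add_norm_add (gradient (linObj ℓ x y) 0)
    (Matrix.toEuclideanLin V (rVec ℓ f x y))]

/-- `‖∇F(0,V)‖ + ‖V‖·‖r‖ ≥ ‖∇F_lin(0)‖`. -/
theorem grad_at_zero_triangle_bound
    {d k n : ℕ} (ℓ : ℝ → ℝ → ℝ) (f : Vec d → Vec k)
    (x : Fin n → Vec d) (y : Fin n → ℝ)
    (hconv : ∀ y₀ : ℝ, ConvexOn ℝ Set.univ fun p => ℓ p y₀)
    (hdiff : ∀ y₀ : ℝ, Differentiable ℝ fun p => ℓ p y₀)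
    (V : Matrix (Fin d) (Fin k) ℝ) :
    ‖gradient (netObj ℓ f x y) (pairWV 0 V)‖ + matSpectralNorm V * ‖rVec ℓ f x y‖ ≥
      ‖gradient (linObj ℓ x y) 0‖ :=
  grad_at_zero_triangle_bound_general ℓ f x y hdiff V

end
end
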